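/- The operator DIV¹(F₁,F₂) = (-1)^{p(F)+1}( ((k+2λ)/k)·D̄₂(F₂) + D̄₁(F₁), D̄₂(F₁) - ((k+2λ)/k)·D̄₁(F₂) ) on pairs of homogeneous elements of the Grassmann algebra commutes with the diagonal affine action: for f ∈ {1, ξ₁, ξ₂, x, ξ₁ξ₂}, DIV¹ ∘ (L^δ_{X_f} ⊕ L^δ_{X_f}) equals (-1)^{p(f)} (L^{δ+1/2}_{X_f} ⊕ L^{δ+1/2}_{X_f}) ∘ DIV¹ plus the rotation correction determined by the constant D̄₁D̄₂(f), and this correction vanishes for f ∈ {1, ξ₁, ξ₂, x}. -/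

import Mathlib

noncomputable section

open Polynomial

/-- The Grassmann algebra `C^∞(S¹)[ξ₁,ξ₂]` (polynomial model in `x`):
an element `f₀ + ξ₁f₁ + ξ₂f₂ + ξ₁ξ₂f₁₂` is encoded by its four components. -/
abbrev Gr := Polynomial ℂ × Polynomial ℂ × Polynomial ℂ × Polynomial ℂ

namespace Gr

/-- Supercommutative multiplication. -/
def gmul (f g : Gr) : Gr :=
  (f.1 * g.1,
   f.1 * g.2.1 + f.2.1 * g.1,
   f.1 * g.2.2.1 + f.2.2.1 * g.1,
   f.1 * g.2.2.2 + f.2.2.2 * g.1 + f.2.1 * g.2.2.1 - f.2.2.1 * g.2.1)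

/-- The even vector field `∂ₓ`. -/
def dX (f : Gr) : Gr :=
  (derivative f.1, derivative f.2.1, derivative f.2.2.1, derivative f.2.2.2)

/-- The left odd derivation `∂_{ξ₁}`. -/
def dXi1 (f : Gr) : Gr := (f.2.1, 0, f.2.2.2, 0)

/-- The left odd derivation `∂_{ξ₂}`. -/
def dXi2 (f : Gr) : Gr := (f.2.2.1, -f.2.2.2, 0, 0)

def xi1 : Gr := (0, 1, 0, 0)
def xi2 : Gr := (0, 0, 1, 0)
def xi12 : Gr := (0, 0, 0, 1)
def oneG : Gr := (1, 0, 0, 0)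
def xG : Gr := (Polynomial.X, 0, 0, 0)

/-- `D̄₁ = ∂_{ξ₁} - ξ₁∂ₓ`. -/
def D1b (f : Gr) : Gr := dXi1 f - gmul xi1 (dX f)
/-- `D̄₂ = ∂_{ξ₂} - ξ₂∂ₓ`. -/
def D2b (f : Gr) : Gr := dXi2 f - gmul xi2 (dX f)
/-- `D₁ = ∂_{ξ₁} + ξ₁∂ₓ`. -/
def Dp1 (f : Gr) : Gr := dXi1 f + gmul xi1 (dX f)
/-- `D₂ = ∂_{ξ₂} + ξ₂∂ₓ`. -/
def Dp2 (f : Gr) : Gr := dXi2 f + gmul xi2 (dX f)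

/-- `f` is homogeneous of parity `p` (`false` = even, `true` = odd). -/
def IsHom (f : Gr) (p : Bool) : Prop :=
  if p then f.1 = 0 ∧ f.2.2.2 = 0 else f.2.1 = 0 ∧ f.2.2.1 = 0

/-- `(-1)^p`. -/
def sgn (p : Bool) : ℂ := if p then -1 else 1

/-- The contact vector field `X_f = f∂ₓ - (-1)^{p(f)} ½(D̄₁(f)D̄₁ + D̄₂(f)D̄₂)`. -/
def Xv (f : Gr) (p : Bool) (F : Gr) : Gr :=
  gmul f (dX F) - (sgn p * (1/2 : ℂ)) • (gmul (D1b f) (D1b F) + gmul (D2b f) (D2b F))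

/-- The Lie derivative `L^λ_{X_f} = X_f + λ f′` on λ-densities. -/
def L (lam : ℂ) (f : Gr) (p : Bool) (F : Gr) : Gr :=
  Xv f p F + lam • gmul (dX f) F

/-- The contact bracket `{f,g} = fg' - f'g - (-1)^{p(f)} ½(D̄₁(f)D̄₁(g) + D̄₂(f)D̄₂(g))`. -/
def cbr (f : Gr) (p : Bool) (g : Gr) : Gr :=
  gmul f (dX g) - gmul (dX f) g
    - (sgn p * (1/2 : ℂ)) • (gmul (D1b f) (D1b g) + gmul (D2b f) (D2b g))

/-- Generalized binomial coefficient `z(z-1)⋯(z-m+1)/m!`. -/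
noncomputable def cbinom (z : ℂ) (m : ℕ) : ℂ :=
  (∏ i ∈ Finset.range m, (z - i)) / (Nat.factorial m)


/-- The affine Hamiltonians `{1, ξ₁, ξ₂, x, ξ₁ξ₂}` with their parities. -/
def aff5 : Fin 5 → Gr × Bool :=
  ![(oneG, false), (xi1, true), (xi2, true), (xG, false), (xi12, false)]

/-- The divergence operator `DIV¹` on symbol pairs of parity `pF`. -/
noncomputable def Div1 (k : ℤ) (lam : ℂ) (pF : Bool) (F : Gr × Gr) : Gr × Gr :=
  (-(sgn pF)) • ((((k : ℂ) + 2*lam) / (k : ℂ)) • D2b F.2 + D1b F.1,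
                 D2b F.1 - (((k : ℂ) + 2*lam) / (k : ℂ)) • D1b F.2)

/-!
For an affine Hamiltonian `f` both `f′ = e` and `D̄₁D̄₂(f) = c` are constants, and the
Leibniz rule for `D̄ᵢ` gives
`D̄₁ ∘ L^δ_{X_f} = (-1)^{p(f)} (L^{δ+1/2}_{X_f} ∘ D̄₁ - (c/2) D̄₂)`,
`D̄₂ ∘ L^δ_{X_f} = (-1)^{p(f)} (L^{δ+1/2}_{X_f} ∘ D̄₂ + (c/2) D̄₁)`:
the weight shift `1/2` comes from `D̄ᵢD̄ᵢ(f) = -f′`, the rotation from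
`D̄₁D̄₂(f) = -D̄₂D̄₁(f) = c`. As `DIV¹` is a constant-coefficient combination of `D̄₁, D̄₂`
and `L^{δ+1/2}_{X_f}` is linear, the rotation terms assemble into `(G₁, G₂) ↦ (-G₂, G₁)`
applied to `DIV¹(F₁, F₂)`.
-/

section Linearity

variable (δ : ℂ) (f : Gr) (p : Bool)

theorem L_add (F G : Gr) : L δ f p (F + G) = L δ f p F + L δ f p G := by
  refine Prod.ext ?_ (Prod.ext ?_ (Prod.ext ?_ ?_)) <;>
    simp [L, Xv, D1b, D2b, dXi1, dXi2, dX, gmul, xi1, xi2, mul_add] <;> module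

theorem L_sub (F G : Gr) : L δ f p (F - G) = L δ f p F - L δ f p G := by
  refine Prod.ext ?_ (Prod.ext ?_ (Prod.ext ?_ ?_)) <;>
    simp [L, Xv, D1b, D2b, dXi1, dXi2, dX, gmul, xi1, xi2, mul_sub] <;> module

theorem L_smul (a : ℂ) (F : Gr) : L δ f p (a • F) = a • L δ f p F := by
  refine Prod.ext ?_ (Prod.ext ?_ (Prod.ext ?_ ?_)) <;>
    simp [L, Xv, D1b, D2b, dXi1, dXi2, dX, gmul, xi1, xi2] <;> module

end Linearity

section Affine

variable {f : Gr} {p : Bool} {e c : ℂ}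

theorem IsHom.affine_cases (hf : IsHom f p) (hf' : dX f = e • oneG)
    (hc : D1b (D2b f) = c • oneG) :
    (p = false ∧ ∃ a : ℂ, f = (C a + e • X, 0, 0, -(c • 1))) ∨
    (p = true ∧ e = 0 ∧ c = 0 ∧ ∃ b₁ b₂ : ℂ, f = (0, C b₁, C b₂, 0)) := by
  obtain ⟨f0, f1, f2, f12⟩ := f
  have h12 : f12 = -(c • 1) := by
    simpa [D1b, D2b, dXi1, dXi2, gmul, xi1, xi2, oneG, neg_eq_iff_eq_neg]
      using congrArg Prod.fst hc
  simp only [dX, oneG, Prod.smul_mk, Prod.mk.injEq, smul_zero] at hf'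
  obtain ⟨h0, h1, h2, -⟩ := hf'
  cases p <;> obtain ⟨rfl, rfl⟩ := hf
  · refine Or.inl ⟨rfl, (f0 - e • X).coeff 0, ?_⟩
    rw [← eq_C_of_derivative_eq_zero (by simp [h0]), sub_add_cancel, h12]
  · refine Or.inr ⟨rfl, ?_, ?_, f1.coeff 0, f2.coeff 0, ?_⟩
    · simpa using h0.symm
    · simpa using h12
    · rw [← eq_C_of_derivative_eq_zero h1, ← eq_C_of_derivative_eq_zero h2]

theorem D1b_L (hf : IsHom f p) (hf' : dX f = e • oneG) (hc : D1b (D2b f) = c • oneG)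
    (δ : ℂ) (F : Gr) :
    D1b (L δ f p F) = sgn p • L (δ + 1/2) f p (D1b F) - (sgn p * c * (1/2)) • D2b F := by
  rcases hf.affine_cases hf' hc with ⟨rfl, a, rfl⟩ | ⟨rfl, rfl, rfl, b₁, b₂, rfl⟩ <;>
    refine Prod.ext ?_ (Prod.ext ?_ (Prod.ext ?_ ?_)) <;>
    simp [L, Xv, D1b, D2b, dXi1, dXi2, dX, gmul, xi1, xi2, sgn] <;>
    match_scalars <;> ring

theorem D2b_L (hf : IsHom f p) (hf' : dX f = e • oneG) (hc : D1b (D2b f) = c • oneG)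
    (δ : ℂ) (F : Gr) :
    D2b (L δ f p F) = sgn p • L (δ + 1/2) f p (D2b F) + (sgn p * c * (1/2)) • D1b F := by
  rcases hf.affine_cases hf' hc with ⟨rfl, a, rfl⟩ | ⟨rfl, rfl, rfl, b₁, b₂, rfl⟩ <;>
    refine Prod.ext ?_ (Prod.ext ?_ (Prod.ext ?_ ?_)) <;>
    simp [L, Xv, D1b, D2b, dXi1, dXi2, dX, gmul, xi1, xi2, sgn] <;>
    match_scalars <;> ring

theorem Div1_L (k : ℤ) (lam : ℂ) (pF : Bool) (hf : IsHom f p) (hf' : dX f = e • oneG)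
    (hc : D1b (D2b f) = c • oneG) (δ : ℂ) (F1 F2 : Gr) :
    Div1 k lam pF (L δ f p F1, L δ f p F2)
      = sgn p • (L (δ + 1/2) f p (Div1 k lam pF (F1, F2)).1,
                 L (δ + 1/2) f p (Div1 k lam pF (F1, F2)).2)
        + (sgn p * c * (1/2)) • (-(Div1 k lam pF (F1, F2)).2, (Div1 k lam pF (F1, F2)).1) := by
  simp only [Div1, D1b_L hf hf' hc, D2b_L hf hf' hc, Prod.smul_mk, Prod.mk_add_mk,
    L_add, L_sub, L_smul]
  congr 1 <;> module

end Affine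

theorem isHom_aff5 (i : Fin 5) : IsHom (aff5 i).1 (aff5 i).2 := by
  fin_cases i <;> simp [IsHom, aff5, oneG, xi1, xi2, xi12, xG]

theorem dX_aff5 (i : Fin 5) : dX (aff5 i).1 = (if (i : ℕ) = 3 then 1 else 0 : ℂ) • oneG := by
  fin_cases i <;> simp [dX, aff5, oneG, xi1, xi2, xi12, xG]

theorem D1b_D2b_aff5 (i : Fin 5) :
    D1b (D2b (aff5 i).1) = (if (i : ℕ) < 4 then 0 else -1 : ℂ) • oneG := by
  fin_cases i <;>
    simp [D1b, D2b, dXi1, dXi2, dX, gmul, aff5, oneG, xi1, xi2, xi12, xG, Prod.ext_iff]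

theorem stmt17_general (k : ℤ) (lam mu : ℂ) :
    ∀ i : Fin 5, ∃ c : ℂ,
      D1b (D2b (aff5 i).1) = c • oneG ∧
      (∀ (pF : Bool) (F1 F2 : Gr), IsHom F1 pF → IsHom F2 pF →
        Div1 k lam pF (L (mu - lam - (k : ℂ)) (aff5 i).1 (aff5 i).2 F1,
                       L (mu - lam - (k : ℂ)) (aff5 i).1 (aff5 i).2 F2)
          = sgn (aff5 i).2 •
              (L (mu - lam - (k : ℂ) + 1/2) (aff5 i).1 (aff5 i).2 (Div1 k lam pF (F1, F2)).1,
               L (mu - lam - (k : ℂ) + 1/2) (aff5 i).1 (aff5 i).2 (Div1 k lam pF (F1, F2)).2)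
            + (sgn (aff5 i).2 * c * (1/2 : ℂ)) •
                (-(Div1 k lam pF (F1, F2)).2, (Div1 k lam pF (F1, F2)).1)) ∧
      ((i : ℕ) < 4 → c = 0) :=
  fun i => ⟨_, D1b_D2b_aff5 i,
    fun pF F1 F2 _ _ => Div1_L k lam pF (isHom_aff5 i) (dX_aff5 i) (D1b_D2b_aff5 i) _ F1 F2,
    fun hi => if_pos hi⟩

/-- for affine `f`, `D̄₁D̄₂(f)` is a constant `c`, and `DIV¹` commutes
with the diagonal affine action up to `(-1)^{p(f)}` and the rotation correction
determined by `c`; the correction vanishes for `f ∈ {1, ξ₁, ξ₂, x}`. -/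
theorem stmt17 (k : ℤ) (hk : k ≠ 0) (lam mu : ℂ) :
    ∀ i : Fin 5, ∃ c : ℂ,
      D1b (D2b (aff5 i).1) = c • oneG ∧
      (∀ (pF : Bool) (F1 F2 : Gr), IsHom F1 pF → IsHom F2 pF →
        Div1 k lam pF (L (mu - lam - (k : ℂ)) (aff5 i).1 (aff5 i).2 F1,
                       L (mu - lam - (k : ℂ)) (aff5 i).1 (aff5 i).2 F2)
          = sgn (aff5 i).2 •
              (L (mu - lam - (k : ℂ) + 1/2) (aff5 i).1 (aff5 i).2 (Div1 k lam pF (F1, F2)).1,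
               L (mu - lam - (k : ℂ) + 1/2) (aff5 i).1 (aff5 i).2 (Div1 k lam pF (F1, F2)).2)
            + (sgn (aff5 i).2 * c * (1/2 : ℂ)) •
                (-(Div1 k lam pF (F1, F2)).2, (Div1 k lam pF (F1, F2)).1)) ∧
      ((i : ℕ) < 4 → c = 0) :=
  stmt17_general k lam mu

end Gr
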